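/- Let M be an n×n Boolean matrix and u, v Boolean n-vectors, and G_{uMv} the weighted graph as above. The shortest (s,t)-path in G_{uMv} has weight exactly 3 if uᵀMv = 1, and the shortest (s,t)-path has weight at least 5 if uᵀMv = 0. In particular, a (5/3 − δ)-approximation of the shortest (s,t)-path distance, for any δ > 0, determines the value of uᵀMv. -/

import Mathlib

/-- Vertices of the graph `G_{uMv}`: a source `s`, a sink `t`,
and two sides `a_1,…,a_n` and `b_1,…,b_n`. -/
inductive Vtx (n : ℕ) where
  | s : Vtx n
  | t : Vtx n
  | a : Fin n → Vtx n
  | b : Fin n → Vtx n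
deriving DecidableEq

/-- Adjacency of `G_{uMv}`: edges between `s` and every `a i`,
between every `a i` and every `b j`, and between every `b j` and `t`. -/
inductive GAdj (n : ℕ) : Vtx n → Vtx n → Prop where
  | sa (i : Fin n) : GAdj n Vtx.s (Vtx.a i)
  | as (i : Fin n) : GAdj n (Vtx.a i) Vtx.s
  | ab (i j : Fin n) : GAdj n (Vtx.a i) (Vtx.b j)
  | ba (i j : Fin n) : GAdj n (Vtx.b j) (Vtx.a i)
  | bt (j : Fin n) : GAdj n (Vtx.b j) Vtx.t
  | tb (j : Fin n) : GAdj n Vtx.t (Vtx.b j)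

/-- Edge weights of `G_{uMv}`: `w(s,aᵢ) = 3 − 2·u[i]`, `w(aᵢ,bⱼ) = 3 − 2·M[i,j]`,
`w(bⱼ,t) = 3 − 2·v[j]`. -/
def gW {n : ℕ} (M : Fin n → Fin n → Bool) (u v : Fin n → Bool) :
    Vtx n → Vtx n → ℕ
  | Vtx.s, Vtx.a i => 3 - 2 * (if u i then 1 else 0)
  | Vtx.a i, Vtx.s => 3 - 2 * (if u i then 1 else 0)
  | Vtx.a i, Vtx.b j => 3 - 2 * (if M i j then 1 else 0)
  | Vtx.b j, Vtx.a i => 3 - 2 * (if M i j then 1 else 0)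
  | Vtx.b j, Vtx.t => 3 - 2 * (if v j then 1 else 0)
  | Vtx.t, Vtx.b j => 3 - 2 * (if v j then 1 else 0)
  | _, _ => 0

/-- The weight of a walk, given as the list of visited vertices:
the sum of the weights of its consecutive edges. -/
def walkWeight {n : ℕ} (w : Vtx n → Vtx n → ℕ) (p : List (Vtx n)) : ℕ :=
  ((p.zip p.tail).map fun q => w q.1 q.2).sum

/-- The set of weights of `(s,t)`-paths in `G_{uMv}`. -/
def stPathWeights (n : ℕ) (M : Fin n → Fin n → Bool) (u v : Fin n → Bool) : Set ℕ :=
  {c | ∃ p : List (Vtx n), p.head? = some Vtx.s ∧ p.getLast? = some Vtx.t ∧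
    List.Chain' (GAdj n) p ∧ p.Nodup ∧ c = walkWeight (gW M u v) p}

/-!
A potential argument. The function `φ = tPotential` assigns to every vertex its distance to `t`
(for `s` this is `3` if `uᵀMv = 1` and `5` otherwise); it satisfies `φ x ≤ w(x,y) + φ y` along
every edge, so summing along an `(s,t)`-path bounds its weight below by `φ s`. The path
`s, aᵢ, bⱼ, t` through a witness of `uᵀMv = 1` has weight `3`. Since `(5/3 − δ)·3 < 5`, an
approximation is below `5` exactly when `uᵀMv = 1`.
-/

lemma walkWeight_cons_cons {n : ℕ} (w : Vtx n → Vtx n → ℕ) (x y : Vtx n) (p : List (Vtx n)) :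
    walkWeight w (x :: y :: p) = w x y + walkWeight w (y :: p) := by
  simp [walkWeight]

lemma le_walkWeight_add_of_potential {n : ℕ} {R : Vtx n → Vtx n → Prop}
    {w : Vtx n → Vtx n → ℕ} {φ : Vtx n → ℕ} (hφ : ∀ x y, R x y → φ x ≤ w x y + φ y) :
    ∀ {p : List (Vtx n)} {x y : Vtx n}, p.IsChain R → p.head? = some x →
      p.getLast? = some y → φ x ≤ walkWeight w p + φ y
  | [], _, _, _, hx, _ => by simp at hx
  | [z], x, y, _, hx, hy => by
    simp only [List.head?_cons, List.getLast?_singleton, Option.some.injEq] at hx hy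
    simp [← hx, ← hy, walkWeight]
  | z :: z' :: p, x, y, hp, hx, hy => by
    simp only [List.head?_cons, Option.some.injEq] at hx
    subst hx
    rw [List.isChain_cons_cons] at hp
    have hrest := le_walkWeight_add_of_potential hφ hp.2 rfl (by simpa using hy)
    have hedge := hφ _ _ hp.1
    rw [walkWeight_cons_cons]
    omega

def tPotential {n : ℕ} (M : Fin n → Fin n → Bool) (u v : Fin n → Bool) : Vtx n → ℕ
  | Vtx.t => 0
  | Vtx.b j => if v j then 1 else 3
  | Vtx.a i => if ∃ j, M i j = true ∧ v j = true then 2 else 4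
  | Vtx.s => if ∃ i j, u i = true ∧ M i j = true ∧ v j = true then 3 else 5

lemma tPotential_le_gW_add {n : ℕ} (M : Fin n → Fin n → Bool) (u v : Fin n → Bool)
    {x y : Vtx n} (h : GAdj n x y) :
    tPotential M u v x ≤ gW M u v x y + tPotential M u v y := by
  cases h <;> simp only [tPotential, gW] <;> split_ifs <;> grind

lemma tPotential_s_le_of_mem_stPathWeights {n : ℕ} {M : Fin n → Fin n → Bool}
    {u v : Fin n → Bool} {c : ℕ} (hc : c ∈ stPathWeights n M u v) :
    tPotential M u v Vtx.s ≤ c := by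
  obtain ⟨p, hs, ht, hp, -, rfl⟩ := hc
  simpa [tPotential] using
    le_walkWeight_add_of_potential (R := GAdj n) (fun _ _ => tPotential_le_gW_add M u v) hp hs ht

lemma three_hop_mem_stPathWeights {n : ℕ} (M : Fin n → Fin n → Bool) (u v : Fin n → Bool)
    (i j : Fin n) :
    gW M u v Vtx.s (Vtx.a i) + (gW M u v (Vtx.a i) (Vtx.b j) + gW M u v (Vtx.b j) Vtx.t) ∈
      stPathWeights n M u v := by
  refine ⟨[Vtx.s, Vtx.a i, Vtx.b j, Vtx.t], rfl, rfl, ?_, by simp, by simp [walkWeight]⟩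
  exact .cons_cons (GAdj.sa i) (.cons_cons (GAdj.ab i j) (.cons_cons (GAdj.bt j) (.singleton _)))

lemma isLeast_stPathWeights_three {n : ℕ} {M : Fin n → Fin n → Bool} {u v : Fin n → Bool}
    (h : ∃ i j, u i = true ∧ M i j = true ∧ v j = true) :
    IsLeast (stPathWeights n M u v) 3 := by
  obtain ⟨i, j, hu, hM, hv⟩ := h
  refine ⟨by simpa [gW, hu, hM, hv] using three_hop_mem_stPathWeights M u v i j, fun c hc => ?_⟩
  have hs := tPotential_s_le_of_mem_stPathWeights hc
  rwa [tPotential, if_pos ⟨i, j, hu, hM, hv⟩] at hs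

lemma five_le_of_mem_stPathWeights {n : ℕ} {M : Fin n → Fin n → Bool} {u v : Fin n → Bool}
    (h : ¬ ∃ i j, u i = true ∧ M i j = true ∧ v j = true) {c : ℕ}
    (hc : c ∈ stPathWeights n M u v) : 5 ≤ c := by
  have hs := tPotential_s_le_of_mem_stPathWeights hc
  rwa [tPotential, if_neg h] at hs

lemma stPathWeights_nonempty {n : ℕ} (hn : 1 ≤ n) (M : Fin n → Fin n → Bool)
    (u v : Fin n → Bool) : (stPathWeights n M u v).Nonempty :=
  ⟨_, three_hop_mem_stPathWeights M u v ⟨0, hn⟩ ⟨0, hn⟩⟩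

/-- The shortest `(s,t)`-path in `G_{uMv}` has weight exactly `3` if `uᵀMv = 1`,
and every `(s,t)`-path has weight at least `5` if `uᵀMv = 0`.  Hence any
`(5/3 − δ)`-approximation `ℓ̂` of the shortest `(s,t)`-path distance, for any
`δ > 0`, determines the value of `uᵀMv`: it is `1` iff `ℓ̂ < 5`. -/
theorem stmt2 (n : ℕ) (hn : 1 ≤ n) (M : Fin n → Fin n → Bool) (u v : Fin n → Bool) :
    ((∃ i j, u i = true ∧ M i j = true ∧ v j = true) →
        IsLeast (stPathWeights n M u v) 3) ∧
    ((¬ ∃ i j, u i = true ∧ M i j = true ∧ v j = true) →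
        ∀ c ∈ stPathWeights n M u v, 5 ≤ c) ∧
    (∀ δ : ℝ, 0 < δ → ∀ ℓ : ℝ,
      ((sInf (stPathWeights n M u v) : ℕ) : ℝ) ≤ ℓ →
      ℓ ≤ (5/3 - δ) * ((sInf (stPathWeights n M u v) : ℕ) : ℝ) →
      (ℓ < 5 ↔ ∃ i j, u i = true ∧ M i j = true ∧ v j = true)) := by
  refine ⟨isLeast_stPathWeights_three, fun h _ => five_le_of_mem_stPathWeights h, ?_⟩
  intro δ hδ ℓ hlow hup
  by_cases h : ∃ i j, u i = true ∧ M i j = true ∧ v j = true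
  · rw [(isLeast_stPathWeights_three h).csInf_eq, Nat.cast_ofNat] at hup
    exact iff_of_true (by linarith) h
  · have hfive : (5 : ℝ) ≤ (sInf (stPathWeights n M u v) : ℕ) := by
      exact_mod_cast five_le_of_mem_stPathWeights h
        (Nat.sInf_mem (stPathWeights_nonempty hn M u v))
    exact iff_of_false (by linarith) h
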